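/- Let M_∞ ⊆ ℕ be a strongly 3-separating set. If M and N are subsets of M_∞ with |M| ≥ 3 and |N| ≥ 3 and M ≠ N, then the semigroups S_M and S_N are not isomorphic. Consequently {S_M : M ⊆ M_∞, |M| ≥ 3} is a family of pairwise non-isomorphic subsemigroups of ℕ × ℕ. -/

import Mathlib

/-- `SM M` is the subsemigroup of `ℕ × ℕ` generated by `{(1, m) : m ∈ M}`. -/
def SM (M : Set ℕ+) : AddSubsemigroup (ℕ+ × ℕ+) :=
  AddSubsemigroup.closure {p : ℕ+ × ℕ+ | ∃ m ∈ M, p = (1, m)}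

/-- A set `M ⊆ ℕ` is 3-separating: `|M| ≥ 3` and for any two triples of
pairwise distinct elements of `M`, the identity
`n₂(m₃−m₁) = n₁(m₃−m₂) + n₃(m₂−m₁)` holds iff the triples are equal. -/
def Sep3 (M : Set ℕ+) : Prop :=
  3 ≤ M.encard ∧
    ∀ m₁ m₂ m₃ n₁ n₂ n₃ : ℕ+,
      m₁ ∈ M → m₂ ∈ M → m₃ ∈ M → n₁ ∈ M → n₂ ∈ M → n₃ ∈ M →
      m₁ ≠ m₂ → m₁ ≠ m₃ → m₂ ≠ m₃ → n₁ ≠ n₂ → n₁ ≠ n₃ → n₂ ≠ n₃ →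
      (((n₂ : ℤ) * ((m₃ : ℤ) - (m₁ : ℤ)) =
          (n₁ : ℤ) * ((m₃ : ℤ) - (m₂ : ℤ)) + (n₃ : ℤ) * ((m₂ : ℤ) - (m₁ : ℤ))) ↔
        (m₁, m₂, m₃) = (n₁, n₂, n₃))

/-- A set `M ⊆ ℕ` is strongly 3-separating: it is 3-separating and for any
two pairs of distinct elements of `M`, `m₁ − m₂ + n₂ − n₁ = 0` holds iff the
pairs are equal. -/
def StrongSep3 (M : Set ℕ+) : Prop :=
  Sep3 M ∧
    ∀ m₁ m₂ n₁ n₂ : ℕ+,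
      m₁ ∈ M → m₂ ∈ M → n₁ ∈ M → n₂ ∈ M → m₁ ≠ m₂ → n₁ ≠ n₂ →
      (((m₁ : ℤ) - (m₂ : ℤ) + (n₂ : ℤ) - (n₁ : ℤ) = 0) ↔ (m₁, m₂) = (n₁, n₂))

/-!
An isomorphism `φ : S_M ≃ S_N` maps elements that are not sums to elements that are not sums,
and in `S_M` these are exactly the generators `(1, m)`; so `φ` maps generators injectively to
generators. For `x < y < z` in `M` the generators satisfy
`(z - y)(1, x) + (y - x)(1, z) = (z - x)(1, y)`; applying `φ` gives the identity of the
3-separation condition for the images of `x, y, z`, which forces `φ` to fix all three generators.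
As `|M| ≥ 3`, every `m ∈ M` lies in such a triple, whence `M ⊆ N`, and symmetrically `N ⊆ M`.
-/

namespace SM

variable {M N : Set ℕ+}

def gen {m : ℕ+} (hm : m ∈ M) : SM M :=
  ⟨(1, m), AddSubsemigroup.subset_closure ⟨m, hm, rfl⟩⟩

lemma eq_of_gen_eq_gen {m n : ℕ+} (hm : m ∈ M) (hn : n ∈ M) (h : gen hm = gen hn) : m = n :=
  congrArg (fun w : SM M => (w : ℕ+ × ℕ+).2) h

lemma eq_gen_or_exists_eq_add (p : SM M) :
    (∃ m, ∃ hm : m ∈ M, p = gen hm) ∨ ∃ u v : SM M, p = u + v := by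
  obtain ⟨p, hp⟩ := p
  induction hp using AddSubsemigroup.closure_induction with
  | mem p hp =>
    obtain ⟨m, hm, rfl⟩ := hp
    exact Or.inl ⟨m, hm, rfl⟩
  | add p q hp hq _ _ => exact Or.inr ⟨⟨p, hp⟩, ⟨q, hq⟩, rfl⟩

lemma gen_ne_add {m : ℕ+} (hm : m ∈ M) (u v : SM M) : gen hm ≠ u + v := by
  intro h
  have h1 := congrArg (fun w : SM M => ((w : ℕ+ × ℕ+).1 : ℕ)) h
  simp only [gen, AddMemClass.coe_add, Prod.fst_add, PNat.add_coe, PNat.one_coe] at h1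
  have := (u : ℕ+ × ℕ+).1.pos
  have := (v : ℕ+ × ℕ+).1.pos
  omega

lemma exists_apply_gen_eq_gen (φ : SM M ≃+ SM N) {m : ℕ+} (hm : m ∈ M) :
    ∃ n, ∃ hn : n ∈ N, φ (gen hm) = gen hn := by
  rcases eq_gen_or_exists_eq_add (φ (gen hm)) with h | ⟨u, v, h⟩
  · exact h
  · refine absurd ?_ (gen_ne_add hm (φ.symm u) (φ.symm v))
    rw [← map_add, ← h, AddEquiv.symm_apply_apply]

def toNatProd (M : Set ℕ+) : WithZero (SM M) →+ ℕ × ℕ :=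
  WithZero.lift ((PNat.coeAddHom.prodMap PNat.coeAddHom).comp (AddMemClass.subtype (SM M)))

lemma toNatProd_injective : Function.Injective (toNatProd M) := by
  intro p q h
  induction p <;> induction q <;> simp [toNatProd, Prod.ext_iff] at h ⊢
  · exact PNat.ne_zero _ h.1.symm
  · exact Subtype.ext (Prod.ext h.1 h.2)

@[simp]
lemma toNatProd_gen {m : ℕ+} (hm : m ∈ M) : toNatProd M (gen hm) = (1, (m : ℕ)) := rfl

-- `SM M` has no zero, hence no `ℕ`-multiples; they live in `WithZero (SM M)`, to which `φ` extends.
lemma mul_add_mul_eq_of_apply_gen (φ : SM M ≃+ SM N) {a b : ℕ} {x y z x' y' z' : ℕ+}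
    {hx : x ∈ M} {hy : y ∈ M} {hz : z ∈ M} {hx' : x' ∈ N} {hy' : y' ∈ N} {hz' : z' ∈ N}
    (ex : φ (gen hx) = gen hx') (ey : φ (gen hy) = gen hy') (ez : φ (gen hz) = gen hz')
    (hrel : a * (x : ℕ) + b * z = (a + b) * y) :
    a * (x' : ℕ) + b * z' = (a + b) * y' := by
  have hM : a • (gen hx : WithZero (SM M)) + b • ↑(gen hz) = (a + b) • ↑(gen hy) :=
    toNatProd_injective (by simp [hrel])
  simpa [ex, ey, ez] using congrArg (fun w => (toNatProd N (φ.withZeroCongr w)).2) hM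

variable {Minf : Set ℕ+}

lemma mem_of_addEquiv_of_lt_of_lt (hSep : Sep3 Minf) (hM : M ⊆ Minf) (hN : N ⊆ Minf)
    (φ : SM M ≃+ SM N) {x y z : ℕ+} (hx : x ∈ M) (hy : y ∈ M) (hz : z ∈ M)
    (hxy : x < y) (hyz : y < z) : x ∈ N ∧ y ∈ N ∧ z ∈ N := by
  obtain ⟨x', hx', ex⟩ := exists_apply_gen_eq_gen φ hx
  obtain ⟨y', hy', ey⟩ := exists_apply_gen_eq_gen φ hy
  obtain ⟨z', hz', ez⟩ := exists_apply_gen_eq_gen φ hz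
  have image_ne : ∀ {m n m' n' : ℕ+} {hm : m ∈ M} {hn : n ∈ M} {hm' : m' ∈ N} {hn' : n' ∈ N},
      φ (gen hm) = gen hm' → φ (gen hn) = gen hn' → m ≠ n → m' ≠ n' := by
    rintro m n m' n' hm hn hm' hn' em en hmn rfl
    exact hmn (eq_of_gen_eq_gen hm hn (φ.injective (em.trans en.symm)))
  obtain ⟨b, hb⟩ := Nat.exists_eq_add_of_le (PNat.coe_le_coe x y |>.mpr hxy.le)
  obtain ⟨a, ha⟩ := Nat.exists_eq_add_of_le (PNat.coe_le_coe y z |>.mpr hyz.le)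
  have hrel := mul_add_mul_eq_of_apply_gen φ ex ey ez (a := a) (b := b) (by rw [ha, hb]; ring)
  have hsep := hSep.2 x y z x' y' z' (hM hx) (hM hy) (hM hz) (hN hx') (hN hy') (hN hz')
    hxy.ne (hxy.trans hyz).ne hyz.ne (image_ne ex ey hxy.ne) (image_ne ex ez (hxy.trans hyz).ne)
    (image_ne ey ez hyz.ne)
  obtain ⟨rfl, rfl, rfl⟩ : x = x' ∧ y = y' ∧ z = z' := by
    simpa using hsep.mp (by zify at ha hb hrel; rw [ha, hb]; linear_combination -hrel)
  exact ⟨hx', hy', hz'⟩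

lemma subset_of_addEquiv (hSep : Sep3 Minf) (hM : M ⊆ Minf) (hN : N ⊆ Minf)
    (hMcard : 3 ≤ M.encard) (φ : SM M ≃+ SM N) : M ⊆ N := by
  intro m hm
  have hcard : 1 < (M \ {m}).encard := by
    rw [← Set.encard_sdiff_singleton_add_one hm] at hMcard
    contrapose! hMcard
    calc _ ≤ (1 : ℕ∞) + 1 := by gcongr
      _ < 3 := by norm_num
  obtain ⟨c, d, ⟨hc, hcm⟩, ⟨hd, hdm⟩, hcd⟩ := Set.one_lt_encard_iff.mp hcard
  wlog hlt : c < d generalizing c d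
  · exact this d c hd hdm hcd.symm hc hcm (lt_of_le_of_ne (not_lt.mp hlt) hcd.symm)
  rcases lt_trichotomy m c with hmc | rfl | hcm'
  · exact (mem_of_addEquiv_of_lt_of_lt hSep hM hN φ hm hc hd hmc hlt).1
  · exact absurd rfl hcm
  rcases lt_trichotomy m d with hmd | rfl | hdm'
  · exact (mem_of_addEquiv_of_lt_of_lt hSep hM hN φ hc hm hd hcm' hmd).2.1
  · exact absurd rfl hdm
  · exact (mem_of_addEquiv_of_lt_of_lt hSep hM hN φ hc hd hm hlt hdm').2.2

end SM

/-- If `M_∞` is strongly 3-separating and `M, N ⊆ M_∞` are distinct subsets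
with at least 3 elements each, then `S_M` and `S_N` are not isomorphic; hence
`{S_M : M ⊆ M_∞, |M| ≥ 3}` consists of pairwise non-isomorphic subsemigroups
of `ℕ × ℕ`. -/
theorem SM_not_iso_SN_of_strongSep3 (Minf : Set ℕ+) (hMinf : StrongSep3 Minf)
    (M N : Set ℕ+) (hM : M ⊆ Minf) (hN : N ⊆ Minf)
    (hMcard : 3 ≤ M.encard) (hNcard : 3 ≤ N.encard) (hMN : M ≠ N) :
    ¬ Nonempty (SM M ≃+ SM N) := by
  rintro ⟨φ⟩
  exact hMN <| (SM.subset_of_addEquiv hMinf.1 hM hN hMcard φ).antisymm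
    (SM.subset_of_addEquiv hMinf.1 hN hM hNcard φ.symm)
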